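/- Let n ≥ 2 and let a₁,…,aₙ be positive integers with Σ_{i=1}^n a_i = 2B for an integer B. Set x_i = 4^{n−i}·B, R_i = Σ_{k=1}^{i−1}(2x_k + a_k), τ = Σ_{k=1}^{n}(2x_k + a_k) and W = B + Σ_{i=1}^n x_i. Consider the mixed instance on a path with: for each i, a tight job with window [R_i, R_i + x_i] and processing time x_i, and a tight job with window [2τ − R_i − x_i, 2τ − R_i] and processing time x_i; for each i, a non-preemptive job with processing time x_i + a_i, release date R_i and deadline 2τ − R_i; and two preemptive jobs, each with processing time W, with windows [0, τ] and [τ, 2τ] respectively. Then there exists a feasible mixed schedule of this instance with busy time at most 2W if and only if there exists S ⊆ {1,…,n} with Σ_{i∈S} a_i = B. -/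

import Mathlib

open MeasureTheory Set

section

variable (n B : ℕ) (a : Fin n → ℕ)

/-- `x i = 4^{n−i} · B` (here `i : Fin n` is 0-indexed, so `x i = 4^{n−1−i} · B`). -/
def xval (i : Fin n) : ℝ := 4 ^ (n - 1 - (i : ℕ)) * B

/-- The release date `R_i = ∑_{k<i} (2 x_k + a_k)` of the `i`-th tight/non-preemptive job. -/
def Rval (i : Fin n) : ℝ := ∑ k ∈ Finset.Iio i, (2 * xval n B k + (a k : ℝ))

/-- The midpoint `τ = ∑_{k} (2 x_k + a_k)` of the time horizon. -/
def τval : ℝ := ∑ k : Fin n, (2 * xval n B k + (a k : ℝ))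

/-- The processing time `W = B + ∑_i x_i` of each of the two preemptive jobs. -/
def Wval : ℝ := (B : ℝ) + ∑ i : Fin n, xval n B i

end

/-!
The tight jobs have total length `2 ∑ xᵢ`, half of it on each side of `τ`, and each preemptive
job forces busy time at least `W = B + ∑ xᵢ` on its side; so a schedule of busy time `2W` has
at most `B` of busy time outside the tight jobs on each side. A non-preemptive job that overlaps
its left (right) tight job sticks out by at least `aᵢ` into the gap after (before) that tight job,
and these gaps are pairwise disjoint. A job placed between its two tight jobs is impossible: the
tight jobs nested inside cover only `2 ∑_{k>i} x_k = 2(xᵢ - B)/3`, so it needs more than `2B` of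
free time, unless `i = n`, where it fills `xᵢ + aᵢ > aᵢ` of the two gaps. Counting the `aᵢ`
against the two budgets `B`, the jobs overlapping their left tight job have `a`-sum exactly `B`.
Conversely, for a partition `S` start job `i` at `Rᵢ` if `i ∈ S` and end it at `2τ - Rᵢ`
otherwise, and run the preemptive jobs exactly where the other jobs run.
-/

open Function
open scoped ENNReal

section SumIio

variable {ι M : Type*} [LinearOrder ι] [LocallyFiniteOrderBot ι] [AddCommMonoid M] {f : ι → M}

theorem Finset.sum_Iio_add_le_sum_Iio [PartialOrder M] [IsOrderedAddMonoid M]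
    (hf : ∀ i, 0 ≤ f i) {i j : ι} (hij : i < j) :
    ∑ k ∈ Finset.Iio i, f k + f i ≤ ∑ k ∈ Finset.Iio j, f k := by
  classical
  rw [add_comm, ← Finset.sum_insert Finset.notMem_Iio_self, Finset.Iio_insert]
  exact Finset.sum_le_sum_of_subset_of_nonneg
    (fun k hk => Finset.mem_Iio.2 ((Finset.mem_Iic.1 hk).trans_lt hij)) fun k _ _ => hf k

theorem Finset.sum_Iio_add_le_sum [PartialOrder M] [IsOrderedAddMonoid M] [Fintype ι]
    (hf : ∀ i, 0 ≤ f i) (i : ι) :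
    ∑ k ∈ Finset.Iio i, f k + f i ≤ ∑ k, f k := by
  classical
  rw [add_comm, ← Finset.sum_insert Finset.notMem_Iio_self, Finset.Iio_insert]
  exact Finset.sum_le_univ_sum_of_nonneg hf

theorem Finset.sum_Iio_add_eq_sum_of_isTop [Fintype ι] {i : ι} (hi : IsTop i) :
    ∑ k ∈ Finset.Iio i, f k + f i = ∑ k, f k := by
  classical
  rw [add_comm, ← Finset.sum_insert Finset.notMem_Iio_self, Finset.Iio_insert,
    Finset.eq_univ_iff_forall.2 fun k => Finset.mem_Iic.2 (hi k)]

end SumIio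

theorem Fin.sub_one_mul_sum_Ioi_pow {R : Type*} [CommRing R] (r : R) {n : ℕ} (i : Fin n) :
    (r - 1) * ∑ k ∈ Finset.Ioi i, r ^ (n - 1 - (k : ℕ)) = r ^ (n - 1 - (i : ℕ)) - 1 := by
  have h := Finset.sum_map (Finset.Ioi i) Fin.valEmbedding (fun m => r ^ (n - 1 - m))
  rw [Fin.map_valEmbedding_Ioi, ← Finset.Ico_add_one_left_eq_Ioo, Finset.sum_Ico_eq_sum_range]
    at h
  simp only [Fin.valEmbedding_apply] at h
  rw [← h, mul_comm, show n - 1 - (i : ℕ) = n - (i + 1) by omega, ← geom_sum_mul,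
    ← Finset.sum_range_reflect]
  refine congrArg (· * (r - 1)) (Finset.sum_congr rfl fun k hk => congrArg (r ^ ·) ?_)
  rw [Finset.mem_range] at hk
  omega

theorem exists_sum_eq_of_le_or_le {ι : Type*} [Fintype ι] {a f g : ι → ℝ} {B : ℝ}
    (hf0 : ∀ i, 0 ≤ f i) (hg0 : ∀ i, 0 ≤ g i) (hsum : ∑ i, a i = 2 * B)
    (hf : ∑ i, f i ≤ B) (hg : ∑ i, g i ≤ B)
    (hcases : ∀ i, a i ≤ f i ∨ a i ≤ g i ∨ a i < f i + g i) :
    ∃ S : Finset ι, ∑ i ∈ S, a i = B := by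
  classical
  have hle : ∀ i, a i ≤ f i + g i := fun i => by
    rcases hcases i with h | h | h <;> linarith [hf0 i, hg0 i]
  have hg' : ∀ i, ¬ a i ≤ f i → a i ≤ g i := fun i hi => by
    by_contra hgi
    have := Finset.sum_lt_sum (fun j _ => hle j)
      ⟨i, Finset.mem_univ i, ((hcases i).resolve_left hi).resolve_left hgi⟩
    rw [Finset.sum_add_distrib] at this
    linarith
  have hP : ∑ i with a i ≤ f i, a i ≤ B :=
    (Finset.sum_le_sum fun i hi => (Finset.mem_filter.1 hi).2).trans <|
      (Finset.sum_le_univ_sum_of_nonneg hf0).trans hf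
  have hQ : ∑ i with ¬ a i ≤ f i, a i ≤ B :=
    (Finset.sum_le_sum fun i hi => hg' i (Finset.mem_filter.1 hi).2).trans <|
      (Finset.sum_le_univ_sum_of_nonneg hg0).trans hg
  have := Finset.sum_filter_add_sum_filter_not Finset.univ (fun i => a i ≤ f i) a
  exact ⟨_, le_antisymm hP (by linarith)⟩

section Measure

variable {α : Type*} [MeasurableSpace α] {μ : Measure α}

theorem measure_inter_le_of_le_measure_diff {U H : Set α} {w : ℝ≥0∞} (hH : MeasurableSet H)
    (hw : w ≠ ⊤) (hU : μ U ≤ w + w) (hdiff : w ≤ μ (U \ H)) : μ (U ∩ H) ≤ w :=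
  ENNReal.le_of_add_le_add_right hw <| calc
    μ (U ∩ H) + w ≤ μ (U ∩ H) + μ (U \ H) := by gcongr
    _ = μ U := measure_inter_add_sdiff U hH
    _ ≤ w + w := hU

theorem measure_le_of_disjoint_union_subset {A D X : Set α} {c : ℝ≥0∞} (hA : MeasurableSet A)
    (hAfin : μ A ≠ ⊤) (hAD : Disjoint A D) (hX : A ∪ D ⊆ X) (hμX : μ X ≤ μ A + c) : μ D ≤ c :=
  ENNReal.le_of_add_le_add_left hAfin <| by
    rw [← measure_union' hAD hA]
    exact (measure_mono hX).trans hμX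

theorem measure_le_inter_Iio_add_inter_Ioi [LinearOrder α] [NullSingletonClass μ] (s : Set α)
    (c : α) : μ s ≤ μ (s ∩ Iio c) + μ (s ∩ Ioi c) := by
  rw [← measure_sdiff_null (measure_singleton c)]
  refine (measure_mono fun t ht => ?_).trans (measure_union_le _ _)
  rcases lt_or_gt_of_ne ht.2 with h | h
  exacts [Or.inl ⟨ht.1, h⟩, Or.inr ⟨ht.1, h⟩]

end Measure

theorem Real.volume_iUnion_Icc {ι : Type*} [Fintype ι] {l u : ι → ℝ} (hlu : ∀ i, l i ≤ u i)
    (hd : Pairwise (Disjoint on fun i => Icc (l i) (u i))) :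
    volume (⋃ i, Icc (l i) (u i)) = ENNReal.ofReal (∑ i, (u i - l i)) := by
  rw [measure_iUnion hd fun _ => measurableSet_Icc, tsum_fintype,
    ENNReal.ofReal_sum_of_nonneg fun i _ => sub_nonneg.2 (hlu i)]
  simp only [Real.volume_Icc]

theorem ENNReal.sum_toReal_le_of_le_ofReal {ι : Type*} {s : Finset ι} {f : ι → ℝ≥0∞} {b : ℝ}
    (hb : 0 ≤ b) (h : ∑ i ∈ s, f i ≤ ENNReal.ofReal b) : ∑ i ∈ s, (f i).toReal ≤ b := by
  rw [← ENNReal.toReal_sum (ENNReal.sum_ne_top.1 (h.trans_lt ENNReal.ofReal_lt_top).ne)]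
  exact ENNReal.toReal_le_of_le_ofReal hb h

section Instance

variable {n B : ℕ} {a : Fin n → ℕ}

lemma xval_nonneg (i : Fin n) : 0 ≤ xval n B i := by unfold xval; positivity

lemma xval_pos (hB : 0 < B) (i : Fin n) : 0 < xval n B i := by unfold xval; positivity

lemma four_mul_le_xval {i : Fin n} (hi : (i : ℕ) + 1 < n) : 4 * (B : ℝ) ≤ xval n B i := by
  unfold xval
  have : (4 : ℝ) ≤ 4 ^ (n - 1 - (i : ℕ)) := le_self_pow₀ (by norm_num) (by omega)
  nlinarith [B.cast_nonneg (α := ℝ)]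

lemma three_mul_sum_Ioi_xval (i : Fin n) :
    3 * ∑ k ∈ Finset.Ioi i, xval n B k = xval n B i - B := by
  simp only [xval, ← Finset.sum_mul]
  linear_combination (B : ℝ) * Fin.sub_one_mul_sum_Ioi_pow (4 : ℝ) i

lemma two_mul_xval_add_nonneg (k : Fin n) : 0 ≤ 2 * xval n B k + (a k : ℝ) := by
  have := xval_nonneg (B := B) k
  positivity

lemma Rval_nonneg (i : Fin n) : 0 ≤ Rval n B a i :=
  Finset.sum_nonneg fun k _ => two_mul_xval_add_nonneg k

lemma Rval_add_le_Rval {k j : Fin n} (h : k < j) :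
    Rval n B a k + (2 * xval n B k + a k) ≤ Rval n B a j :=
  Finset.sum_Iio_add_le_sum_Iio two_mul_xval_add_nonneg h

lemma Rval_add_le_τval (i : Fin n) : Rval n B a i + (2 * xval n B i + a i) ≤ τval n B a :=
  Finset.sum_Iio_add_le_sum two_mul_xval_add_nonneg i

lemma Rval_add_eq_τval {i : Fin n} (hi : (i : ℕ) + 1 = n) :
    Rval n B a i + (2 * xval n B i + a i) = τval n B a :=
  Finset.sum_Iio_add_eq_sum_of_isTop fun k => Fin.le_def.2 (by omega)

lemma Rval_add_xval_le {k i : Fin n} (h : k ≤ i) :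
    Rval n B a k + xval n B k ≤ Rval n B a i + xval n B i := by
  rcases h.lt_or_eq with h | rfl
  · linarith [Rval_add_le_Rval (a := a) (B := B) h, xval_nonneg (B := B) i, xval_nonneg (B := B) k,
      (a k).cast_nonneg (α := ℝ)]
  · rfl

-- Left of `τ` the instance is the concatenation of the blocks `[Rᵢ, Rᵢ₊₁)`, each made of the tight
-- job `i` followed by a gap of length `xᵢ + aᵢ`; right of `τ` it is the mirror image.
variable (n B a) in
def blockL (i : Fin n) : Set ℝ := Ico (Rval n B a i) (Rval n B a i + (2 * xval n B i + a i))

variable (n B a) in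
def blockR (i : Fin n) : Set ℝ :=
  Ioc (2 * τval n B a - (Rval n B a i + (2 * xval n B i + a i))) (2 * τval n B a - Rval n B a i)

lemma pairwise_disjoint_blockL : Pairwise (Disjoint on blockL n B a) :=
  (pairwise_disjoint_on _).2 fun k j hkj => disjoint_left.2 fun t hk hj => by
    linarith [Rval_add_le_Rval (a := a) (B := B) hkj, hk.2, hj.1]

lemma pairwise_disjoint_blockR : Pairwise (Disjoint on blockR n B a) :=
  (pairwise_disjoint_on _).2 fun k j hkj => disjoint_left.2 fun t hk hj => by
    linarith [Rval_add_le_Rval (a := a) (B := B) hkj, hk.1, hj.2]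

lemma blockL_subset_Iio (i : Fin n) : blockL n B a i ⊆ Iio (τval n B a) := fun _ ht =>
  ht.2.trans_le (Rval_add_le_τval i)

lemma blockR_subset_Ioi (i : Fin n) : blockR n B a i ⊆ Ioi (τval n B a) := fun _ ht =>
  mem_Ioi.2 <| by linarith [ht.1, Rval_add_le_τval (a := a) (B := B) i]

variable (n B a) in
def tightL (i : Fin n) : Set ℝ := Icc (Rval n B a i) (Rval n B a i + xval n B i)

variable (n B a) in
def tightR (i : Fin n) : Set ℝ :=
  Icc (2 * τval n B a - Rval n B a i - xval n B i) (2 * τval n B a - Rval n B a i)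

variable (n B a) in
def tightSet : Set ℝ := (⋃ i, tightL n B a i) ∪ ⋃ i, tightR n B a i

variable (n B a) in
def gapL (i : Fin n) : Set ℝ :=
  Ioo (Rval n B a i + xval n B i) (Rval n B a i + (2 * xval n B i + a i))

variable (n B a) in
def gapR (i : Fin n) : Set ℝ :=
  Ioo (2 * τval n B a - (Rval n B a i + (2 * xval n B i + a i)))
    (2 * τval n B a - Rval n B a i - xval n B i)

lemma volume_tightL (i : Fin n) : volume (tightL n B a i) = ENNReal.ofReal (xval n B i) := by
  rw [tightL, Real.volume_Icc, add_sub_cancel_left]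

lemma volume_tightR (i : Fin n) : volume (tightR n B a i) = ENNReal.ofReal (xval n B i) := by
  rw [tightR, Real.volume_Icc, sub_sub_cancel]

lemma tightL_subset_blockL (ha : ∀ i, 0 < a i) (i : Fin n) : tightL n B a i ⊆ blockL n B a i :=
  fun t ht => ⟨ht.1, by
    linarith [ht.2, xval_nonneg (B := B) i, (Nat.cast_pos (α := ℝ)).2 (ha i)]⟩

lemma tightR_subset_blockR (ha : ∀ i, 0 < a i) (i : Fin n) : tightR n B a i ⊆ blockR n B a i :=
  fun t ht => ⟨by
    linarith [ht.1, xval_nonneg (B := B) i, (Nat.cast_pos (α := ℝ)).2 (ha i)], ht.2⟩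

lemma gapL_subset_blockL (i : Fin n) : gapL n B a i ⊆ blockL n B a i :=
  fun t ht => ⟨by linarith [ht.1, xval_nonneg (B := B) i], ht.2⟩

lemma gapR_subset_blockR (i : Fin n) : gapR n B a i ⊆ blockR n B a i :=
  fun t ht => ⟨ht.1, by linarith [ht.2, xval_nonneg (B := B) i]⟩

lemma volume_iUnion_tightL (ha : ∀ i, 0 < a i) :
    volume (⋃ i, tightL n B a i) = ENNReal.ofReal (∑ i, xval n B i) := by
  unfold tightL
  rw [Real.volume_iUnion_Icc (fun i => by linarith [xval_nonneg (B := B) i])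
    fun i j h => (pairwise_disjoint_blockL h).mono (tightL_subset_blockL ha i)
      (tightL_subset_blockL ha j)]
  simp only [add_sub_cancel_left]

lemma volume_iUnion_tightR (ha : ∀ i, 0 < a i) :
    volume (⋃ i, tightR n B a i) = ENNReal.ofReal (∑ i, xval n B i) := by
  unfold tightR
  rw [Real.volume_iUnion_Icc (fun i => by linarith [xval_nonneg (B := B) i])
    fun i j h => (pairwise_disjoint_blockR h).mono (tightR_subset_blockR ha i)
      (tightR_subset_blockR ha j)]
  simp only [sub_sub_cancel]

lemma disjoint_gapL_tightSet (ha : ∀ i, 0 < a i) (i : Fin n) :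
    Disjoint (gapL n B a i) (tightSet n B a) := by
  simp only [tightSet, disjoint_union_right, disjoint_iUnion_right]
  refine ⟨fun k => ?_, fun k => ?_⟩
  · rcases eq_or_ne i k with rfl | hik
    · exact disjoint_left.2 fun t ht ht' => by linarith [ht.1, ht'.2]
    · exact (pairwise_disjoint_blockL hik).mono (gapL_subset_blockL i) (tightL_subset_blockL ha k)
  · exact Ioi_disjoint_Iio_same.symm.mono ((gapL_subset_blockL i).trans (blockL_subset_Iio i))
      ((tightR_subset_blockR ha k).trans (blockR_subset_Ioi k))

lemma disjoint_gapR_tightSet (ha : ∀ i, 0 < a i) (i : Fin n) :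
    Disjoint (gapR n B a i) (tightSet n B a) := by
  simp only [tightSet, disjoint_union_right, disjoint_iUnion_right]
  refine ⟨fun k => ?_, fun k => ?_⟩
  · exact Ioi_disjoint_Iio_same.mono ((gapR_subset_blockR i).trans (blockR_subset_Ioi i))
      ((tightL_subset_blockL ha k).trans (blockL_subset_Iio k))
  · rcases eq_or_ne i k with rfl | hik
    · exact disjoint_left.2 fun t ht ht' => by linarith [ht.2, ht'.1]
    · exact (pairwise_disjoint_blockR hik).mono (gapR_subset_blockR i) (tightR_subset_blockR ha k)

lemma tightSet_inter_Ioo_subset (i : Fin n) :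
    tightSet n B a ∩ Ioo (Rval n B a i + xval n B i) (2 * τval n B a - Rval n B a i - xval n B i) ⊆
      ⋃ k ∈ Finset.Ioi i, (tightL n B a k ∪ tightR n B a k) := by
  rintro t ⟨ht | ht, hlo, hhi⟩ <;> obtain ⟨k, hk⟩ := mem_iUnion.1 ht
  · refine mem_iUnion₂.2 ⟨k, Finset.mem_Ioi.2 (lt_of_not_ge fun hki => ?_), Or.inl hk⟩
    linarith [Rval_add_xval_le (a := a) (B := B) hki, hk.2]
  · refine mem_iUnion₂.2 ⟨k, Finset.mem_Ioi.2 (lt_of_not_ge fun hki => ?_), Or.inr hk⟩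
    linarith [Rval_add_xval_le (a := a) (B := B) hki, hk.1]

lemma volume_biUnion_tight_le (I : Finset (Fin n)) :
    volume (⋃ k ∈ I, (tightL n B a k ∪ tightR n B a k)) ≤
      ENNReal.ofReal (2 * ∑ k ∈ I, xval n B k) := by
  refine (measure_biUnion_finset_le I _).trans ?_
  rw [Finset.mul_sum, ENNReal.ofReal_sum_of_nonneg fun k _ => by linarith [xval_nonneg (B := B) k]]
  refine Finset.sum_le_sum fun k _ => (measure_union_le _ _).trans_eq ?_
  rw [volume_tightL, volume_tightR, ← ENNReal.ofReal_add (xval_nonneg k) (xval_nonneg k), two_mul]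

variable (n B a) in
def job (s : Fin n → ℝ) (i : Fin n) : Set ℝ := Icc (s i) (s i + (xval n B i + (a i : ℝ)))

lemma ofReal_le_volume_job_inter_gapL {s : Fin n → ℝ} {i : Fin n} (hs : Rval n B a i ≤ s i)
    (hleft : s i < Rval n B a i + xval n B i) :
    ENNReal.ofReal (a i) ≤ volume (job n B a s i ∩ gapL n B a i) :=
  calc ENNReal.ofReal (a i)
      ≤ volume (Ioc (Rval n B a i + xval n B i) (s i + (xval n B i + a i))) := by
        rw [Real.volume_Ioc]
        exact ENNReal.ofReal_le_ofReal (by linarith)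
    _ ≤ volume (job n B a s i ∩ gapL n B a i) := measure_mono fun t ht =>
        ⟨⟨by linarith [ht.1], ht.2⟩, ht.1, by linarith [ht.2]⟩

lemma ofReal_le_volume_job_inter_gapR {s : Fin n → ℝ} {i : Fin n}
    (hs : s i + (xval n B i + a i) ≤ 2 * τval n B a - Rval n B a i)
    (hright : 2 * τval n B a - Rval n B a i - xval n B i < s i + (xval n B i + a i)) :
    ENNReal.ofReal (a i) ≤ volume (job n B a s i ∩ gapR n B a i) :=
  calc ENNReal.ofReal (a i)
      ≤ volume (Ico (s i) (2 * τval n B a - Rval n B a i - xval n B i)) := by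
        rw [Real.volume_Ico]
        exact ENNReal.ofReal_le_ofReal (by linarith)
    _ ≤ volume (job n B a s i ∩ gapR n B a i) := measure_mono fun t ht =>
        ⟨⟨ht.1, by linarith [ht.2]⟩, by linarith [ht.1], ht.2⟩

lemma ofReal_le_volume_job_inter_gapL_add_gapR {s : Fin n → ℝ} {i : Fin n}
    (hi : (i : ℕ) + 1 = n) (hL : Rval n B a i + xval n B i ≤ s i)
    (hR : s i + (xval n B i + a i) ≤ 2 * τval n B a - Rval n B a i - xval n B i) :
    ENNReal.ofReal (xval n B i + a i) ≤
      volume (job n B a s i ∩ gapL n B a i) + volume (job n B a s i ∩ gapR n B a i) := by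
  -- for the last job the two gaps are the two halves of the free window around `τ`
  have hτ := Rval_add_eq_τval (a := a) (B := B) hi
  calc ENNReal.ofReal (xval n B i + a i)
      = volume (Ioo (s i) (s i + (xval n B i + a i)) \ {τval n B a}) := by
        rw [measure_sdiff_null (measure_singleton _), Real.volume_Ioo, add_sub_cancel_left]
    _ ≤ volume (job n B a s i ∩ gapL n B a i ∪ job n B a s i ∩ gapR n B a i) := by
        refine measure_mono fun t ⟨ht, htτ⟩ => ?_
        rcases lt_or_gt_of_ne htτ with h | h
        · exact Or.inl ⟨Ioo_subset_Icc_self ht, by linarith [ht.1], by linarith⟩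
        · exact Or.inr ⟨Ioo_subset_Icc_self ht, by linarith, by linarith [ht.2]⟩
    _ ≤ _ := measure_union_le _ _

lemma ofReal_lt_volume_job_diff_tightSet (ha : ∀ i, 0 < a i) {s : Fin n → ℝ} {i : Fin n}
    (hi : (i : ℕ) + 1 < n) (hL : Rval n B a i + xval n B i ≤ s i)
    (hR : s i + (xval n B i + a i) ≤ 2 * τval n B a - Rval n B a i - xval n B i) :
    ENNReal.ofReal (2 * B) < volume (job n B a s i \ tightSet n B a) := by
  set K := ⋃ k ∈ Finset.Ioi i, (tightL n B a k ∪ tightR n B a k)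
  have h3 := three_mul_sum_Ioi_xval (B := B) i
  have h4 := four_mul_le_xval (B := B) hi
  have hai : (1 : ℝ) ≤ a i := by exact_mod_cast ha i
  have hK : 0 ≤ ∑ k ∈ Finset.Ioi i, xval n B k := Finset.sum_nonneg fun k _ => xval_nonneg k
  calc ENNReal.ofReal (2 * B)
      < ENNReal.ofReal (xval n B i + a i - 2 * ∑ k ∈ Finset.Ioi i, xval n B k) :=
        (ENNReal.ofReal_lt_ofReal_iff (by linarith)).2 (by linarith)
    _ = volume (Ioo (s i) (s i + (xval n B i + a i))) -
          ENNReal.ofReal (2 * ∑ k ∈ Finset.Ioi i, xval n B k) := by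
        rw [ENNReal.ofReal_sub _ (by positivity), Real.volume_Ioo, add_sub_cancel_left]
    _ ≤ volume (Ioo (s i) (s i + (xval n B i + a i))) - volume K :=
        tsub_le_tsub_left (volume_biUnion_tight_le _) _
    _ ≤ volume (Ioo (s i) (s i + (xval n B i + a i)) \ K) := le_measure_sdiff
    _ ≤ volume (job n B a s i \ tightSet n B a) := measure_mono fun t ⟨ht, htK⟩ =>
        ⟨Ioo_subset_Icc_self ht, fun htT =>
          htK (tightSet_inter_Ioo_subset i ⟨htT, by linarith [ht.1], by linarith [ht.2]⟩)⟩

lemma job_gap_cases (hB : 0 < B) (ha : ∀ i, 0 < a i) {s : Fin n → ℝ} {i : Fin n}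
    (hs : Rval n B a i ≤ s i ∧ s i + (xval n B i + a i) ≤ 2 * τval n B a - Rval n B a i)
    (hfree : volume (job n B a s i \ tightSet n B a) ≤ ENNReal.ofReal (2 * B)) :
    (a i : ℝ) ≤ (volume (job n B a s i ∩ gapL n B a i)).toReal ∨
      (a i : ℝ) ≤ (volume (job n B a s i ∩ gapR n B a i)).toReal ∨
      (a i : ℝ) < (volume (job n B a s i ∩ gapL n B a i)).toReal +
        (volume (job n B a s i ∩ gapR n B a i)).toReal := by
  have hfin : ∀ G, volume (job n B a s i ∩ G) ≠ ⊤ := fun G =>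
    ((measure_mono inter_subset_left).trans_lt measure_Icc_lt_top).ne
  rcases lt_or_ge (s i) (Rval n B a i + xval n B i) with hleft | hL
  · exact Or.inl <| (ENNReal.ofReal_le_iff_le_toReal (hfin _)).1 <|
      ofReal_le_volume_job_inter_gapL hs.1 hleft
  rcases lt_or_ge (2 * τval n B a - Rval n B a i - xval n B i) (s i + (xval n B i + a i))
    with hright | hR
  · exact Or.inr <| Or.inl <| (ENNReal.ofReal_le_iff_le_toReal (hfin _)).1 <|
      ofReal_le_volume_job_inter_gapR hs.2 hright
  refine Or.inr (Or.inr ?_)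
  rcases (Nat.succ_le_of_lt i.isLt).eq_or_lt with hi | hi
  · have h := (ENNReal.ofReal_le_iff_le_toReal (ENNReal.add_ne_top.2 ⟨hfin _, hfin _⟩)).1 <|
      ofReal_le_volume_job_inter_gapL_add_gapR hi hL hR
    rw [ENNReal.toReal_add (hfin _) (hfin _)] at h
    linarith [xval_pos hB i]
  · exact absurd hfree (not_le.2 (ofReal_lt_volume_job_diff_tightSet ha hi hL hR))

variable (n B a) in
def busySet (s : Fin n → ℝ) (S1 S2 : Set ℝ) : Set ℝ :=
  (⋃ i, tightL n B a i) ∪ (⋃ i, tightR n B a i) ∪ (⋃ i, job n B a s i) ∪ S1 ∪ S2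

variable (n B a) in
def IsLowBusySchedule (s : Fin n → ℝ) (S1 S2 : Set ℝ) : Prop :=
  (∀ i, Rval n B a i ≤ s i ∧ s i + (xval n B i + (a i : ℝ)) ≤ 2 * τval n B a - Rval n B a i) ∧
    MeasurableSet S1 ∧ S1 ⊆ Icc 0 (τval n B a) ∧ volume S1 = ENNReal.ofReal (Wval n B) ∧
    MeasurableSet S2 ∧ S2 ⊆ Icc (τval n B a) (2 * τval n B a) ∧
      volume S2 = ENNReal.ofReal (Wval n B) ∧
    volume (busySet n B a s S1 S2) ≤ ENNReal.ofReal (2 * Wval n B)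

lemma Wval_nonneg : 0 ≤ Wval n B :=
  add_nonneg B.cast_nonneg (Finset.sum_nonneg fun i _ => xval_nonneg i)

lemma volume_diff_tightSet_inter_Iio_le (ha : ∀ i, 0 < a i) {U : Set ℝ}
    (hTU : tightSet n B a ⊆ U) (hU : volume (U ∩ Iio (τval n B a)) ≤ ENNReal.ofReal (Wval n B)) :
    volume ((U \ tightSet n B a) ∩ Iio (τval n B a)) ≤ ENNReal.ofReal B := by
  refine measure_le_of_disjoint_union_subset (A := ⋃ i, tightL n B a i)
    (MeasurableSet.iUnion fun _ => measurableSet_Icc)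
    ((volume_iUnion_tightL ha).trans_ne ENNReal.ofReal_ne_top)
    (disjoint_left.2 fun t ht htD => htD.1.2 (Or.inl ht)) (union_subset ?_ ?_) (hU.trans_eq ?_)
  · exact fun t ht => ⟨hTU (Or.inl ht), by
      obtain ⟨i, hi⟩ := mem_iUnion.1 ht
      exact blockL_subset_Iio i (tightL_subset_blockL ha i hi)⟩
  · exact inter_subset_inter_left _ sdiff_subset
  · rw [volume_iUnion_tightL ha, Wval, add_comm, ENNReal.ofReal_add
      (Finset.sum_nonneg fun i _ => xval_nonneg i) B.cast_nonneg]

lemma volume_diff_tightSet_inter_Ioi_le (ha : ∀ i, 0 < a i) {U : Set ℝ}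
    (hTU : tightSet n B a ⊆ U) (hU : volume (U ∩ Ioi (τval n B a)) ≤ ENNReal.ofReal (Wval n B)) :
    volume ((U \ tightSet n B a) ∩ Ioi (τval n B a)) ≤ ENNReal.ofReal B := by
  refine measure_le_of_disjoint_union_subset (A := ⋃ i, tightR n B a i)
    (MeasurableSet.iUnion fun _ => measurableSet_Icc)
    ((volume_iUnion_tightR ha).trans_ne ENNReal.ofReal_ne_top)
    (disjoint_left.2 fun t ht htD => htD.1.2 (Or.inr ht)) (union_subset ?_ ?_) (hU.trans_eq ?_)
  · exact fun t ht => ⟨hTU (Or.inr ht), by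
      obtain ⟨i, hi⟩ := mem_iUnion.1 ht
      exact blockR_subset_Ioi i (tightR_subset_blockR ha i hi)⟩
  · exact inter_subset_inter_left _ sdiff_subset
  · rw [volume_iUnion_tightR ha, Wval, add_comm, ENNReal.ofReal_add
      (Finset.sum_nonneg fun i _ => xval_nonneg i) B.cast_nonneg]

lemma sum_volume_job_inter_gapL_le (ha : ∀ i, 0 < a i) {s : Fin n → ℝ} {U : Set ℝ}
    (hU : ∀ i, job n B a s i ⊆ U) :
    ∑ i, volume (job n B a s i ∩ gapL n B a i) ≤
      volume ((U \ tightSet n B a) ∩ Iio (τval n B a)) := by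
  have h := measure_iUnion (μ := volume) (f := fun i => job n B a s i ∩ gapL n B a i)
    (fun i j h => (pairwise_disjoint_blockL h).mono
      (inter_subset_right.trans (gapL_subset_blockL i))
      (inter_subset_right.trans (gapL_subset_blockL j)))
    fun i => measurableSet_Icc.inter measurableSet_Ioo
  rw [tsum_fintype] at h
  rw [← h]
  exact measure_mono <| iUnion_subset fun i t ht =>
    ⟨⟨hU i ht.1, (disjoint_gapL_tightSet ha i).notMem_of_mem_left ht.2⟩,
      blockL_subset_Iio i (gapL_subset_blockL i ht.2)⟩

lemma sum_volume_job_inter_gapR_le (ha : ∀ i, 0 < a i) {s : Fin n → ℝ} {U : Set ℝ}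
    (hU : ∀ i, job n B a s i ⊆ U) :
    ∑ i, volume (job n B a s i ∩ gapR n B a i) ≤
      volume ((U \ tightSet n B a) ∩ Ioi (τval n B a)) := by
  have h := measure_iUnion (μ := volume) (f := fun i => job n B a s i ∩ gapR n B a i)
    (fun i j h => (pairwise_disjoint_blockR h).mono
      (inter_subset_right.trans (gapR_subset_blockR i))
      (inter_subset_right.trans (gapR_subset_blockR j)))
    fun i => measurableSet_Icc.inter measurableSet_Ioo
  rw [tsum_fintype] at h
  rw [← h]
  exact measure_mono <| iUnion_subset fun i t ht =>
    ⟨⟨hU i ht.1, (disjoint_gapR_tightSet ha i).notMem_of_mem_left ht.2⟩,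
      blockR_subset_Ioi i (gapR_subset_blockR i ht.2)⟩

theorem exists_sum_eq_of_isLowBusySchedule (hB : 0 < B) (ha : ∀ i, 0 < a i)
    (hsum : ∑ i, a i = 2 * B) {s : Fin n → ℝ} {S1 S2 : Set ℝ}
    (h : IsLowBusySchedule n B a s S1 S2) : ∃ S : Finset (Fin n), ∑ i ∈ S, a i = B := by
  obtain ⟨hs, -, hS1, hS1vol, -, hS2, hS2vol, hbusy⟩ := h
  set U := busySet n B a s S1 S2
  have hTU : tightSet n B a ⊆ U := fun t ht => Or.inl (Or.inl (Or.inl ht))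
  have hjob : ∀ i, job n B a s i ⊆ U := fun i t ht =>
    Or.inl (Or.inl (Or.inr (mem_iUnion.2 ⟨i, ht⟩)))
  have h2W : volume U ≤ ENNReal.ofReal (Wval n B) + ENNReal.ofReal (Wval n B) := by
    rwa [← ENNReal.ofReal_add Wval_nonneg Wval_nonneg, ← two_mul]
  -- the preemptive job on each side of `τ` leaves at most `W` of busy time for the other side
  have hleft := volume_diff_tightSet_inter_Iio_le ha hTU <|
    measure_inter_le_of_le_measure_diff measurableSet_Iio ENNReal.ofReal_ne_top h2W <|
      hS2vol ▸ measure_mono fun t ht => ⟨Or.inr ht, not_lt.2 (hS2 ht).1⟩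
  have hright := volume_diff_tightSet_inter_Ioi_le ha hTU <|
    measure_inter_le_of_le_measure_diff measurableSet_Ioi ENNReal.ofReal_ne_top h2W <|
      hS1vol ▸ measure_mono fun t ht => ⟨Or.inl (Or.inr ht), not_lt.2 (hS1 ht).2⟩
  have hfree : volume (U \ tightSet n B a) ≤ ENNReal.ofReal (2 * B) := by
    rw [two_mul, ENNReal.ofReal_add B.cast_nonneg B.cast_nonneg]
    exact (measure_le_inter_Iio_add_inter_Ioi _ _).trans (add_le_add hleft hright)
  obtain ⟨S, hS⟩ := exists_sum_eq_of_le_or_le (fun _ => ENNReal.toReal_nonneg)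
    (fun _ => ENNReal.toReal_nonneg) (by exact_mod_cast hsum)
    (ENNReal.sum_toReal_le_of_le_ofReal B.cast_nonneg
      ((sum_volume_job_inter_gapL_le ha hjob).trans hleft))
    (ENNReal.sum_toReal_le_of_le_ofReal B.cast_nonneg
      ((sum_volume_job_inter_gapR_le ha hjob).trans hright))
    fun i => job_gap_cases hB ha (hs i) <|
      (measure_mono (sdiff_subset_sdiff_left (hjob i))).trans hfree
  exact ⟨S, by exact_mod_cast hS⟩

variable (n B a) in
def leftCover (c : Fin n → ℝ) : Set ℝ :=
  ⋃ i, Icc (Rval n B a i) (Rval n B a i + xval n B i + c i)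

variable (n B a) in
def rightCover (c : Fin n → ℝ) : Set ℝ :=
  ⋃ i, Icc (2 * τval n B a - Rval n B a i - xval n B i - c i) (2 * τval n B a - Rval n B a i)

lemma Icc_subset_blockL (hB : 0 < B) {i : Fin n} {c : ℝ} (hc : c ≤ a i) :
    Icc (Rval n B a i) (Rval n B a i + xval n B i + c) ⊆ blockL n B a i :=
  fun t ht => ⟨ht.1, by linarith [ht.2, xval_pos hB i]⟩

lemma Icc_subset_blockR (hB : 0 < B) {i : Fin n} {c : ℝ} (hc : c ≤ a i) :
    Icc (2 * τval n B a - Rval n B a i - xval n B i - c) (2 * τval n B a - Rval n B a i) ⊆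
      blockR n B a i :=
  fun t ht => ⟨by linarith [ht.1, xval_pos hB i], ht.2⟩

lemma volume_leftCover (hB : 0 < B) {c : Fin n → ℝ} (hc0 : ∀ i, 0 ≤ c i) (hca : ∀ i, c i ≤ a i) :
    volume (leftCover n B a c) = ENNReal.ofReal (∑ i, (xval n B i + c i)) := by
  rw [leftCover, Real.volume_iUnion_Icc (fun i => by linarith [xval_nonneg (B := B) i, hc0 i])
    fun i j h => (pairwise_disjoint_blockL h).mono (Icc_subset_blockL hB (hca i))
      (Icc_subset_blockL hB (hca j))]
  simp only [add_assoc, add_sub_cancel_left]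

lemma volume_rightCover (hB : 0 < B) {c : Fin n → ℝ} (hc0 : ∀ i, 0 ≤ c i) (hca : ∀ i, c i ≤ a i) :
    volume (rightCover n B a c) = ENNReal.ofReal (∑ i, (xval n B i + c i)) := by
  rw [rightCover, Real.volume_iUnion_Icc (fun i => by linarith [xval_nonneg (B := B) i, hc0 i])
    fun i j h => (pairwise_disjoint_blockR h).mono (Icc_subset_blockR hB (hca i))
      (Icc_subset_blockR hB (hca j))]
  exact congrArg _ (Finset.sum_congr rfl fun i _ => by ring)

lemma leftCover_subset_Icc (hB : 0 < B) {c : Fin n → ℝ} (hca : ∀ i, c i ≤ a i) :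
    leftCover n B a c ⊆ Icc 0 (τval n B a) :=
  iUnion_subset fun i _ ht => ⟨(Rval_nonneg i).trans ht.1,
    (blockL_subset_Iio i (Icc_subset_blockL hB (hca i) ht)).le⟩

lemma rightCover_subset_Icc (hB : 0 < B) {c : Fin n → ℝ} (hca : ∀ i, c i ≤ a i) :
    rightCover n B a c ⊆ Icc (τval n B a) (2 * τval n B a) :=
  iUnion_subset fun i _ ht => ⟨(blockR_subset_Ioi i (Icc_subset_blockR hB (hca i) ht)).le,
    by linarith [ht.2, Rval_nonneg (a := a) (B := B) i]⟩

lemma busySet_subset_cover {s c c' : Fin n → ℝ} (hc0 : ∀ i, 0 ≤ c i) (hc'0 : ∀ i, 0 ≤ c' i)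
    (hjob : ∀ i, job n B a s i ⊆ leftCover n B a c ∪ rightCover n B a c') :
    busySet n B a s (leftCover n B a c) (rightCover n B a c') ⊆
      leftCover n B a c ∪ rightCover n B a c' := by
  refine union_subset (union_subset (union_subset (union_subset ?_ ?_) (iUnion_subset hjob))
    subset_union_left) subset_union_right
  · exact iUnion_subset fun i t ht => Or.inl (mem_iUnion.2 ⟨i, ht.1, by linarith [ht.2, hc0 i]⟩)
  · exact iUnion_subset fun i t ht => Or.inr (mem_iUnion.2 ⟨i, by linarith [ht.1, hc'0 i], ht.2⟩)

theorem isLowBusySchedule_leftCover_rightCover (hB : 0 < B) (hsum : ∑ i, a i = 2 * B)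
    {s c : Fin n → ℝ} (hc0 : ∀ i, 0 ≤ c i) (hca : ∀ i, c i ≤ a i) (hsumc : ∑ i, c i = B)
    (hs : ∀ i, Rval n B a i ≤ s i ∧ s i + (xval n B i + a i) ≤ 2 * τval n B a - Rval n B a i)
    (hjob : ∀ i, job n B a s i ⊆ leftCover n B a c ∪ rightCover n B a (fun i => a i - c i)) :
    IsLowBusySchedule n B a s (leftCover n B a c) (rightCover n B a (fun i => a i - c i)) := by
  have hsumc' : ∑ i, ((a i : ℝ) - c i) = B := by
    rw [Finset.sum_sub_distrib, hsumc, show ∑ i, (a i : ℝ) = 2 * B by exact_mod_cast hsum]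
    ring
  have hW : ∀ d : Fin n → ℝ, ∑ i, d i = B →
      ENNReal.ofReal (∑ i, (xval n B i + d i)) = ENNReal.ofReal (Wval n B) := fun d hd => by
    rw [Finset.sum_add_distrib, hd, Wval, add_comm]
  have hvolL := (volume_leftCover hB hc0 hca).trans (hW c hsumc)
  have hvolR := (volume_rightCover (a := a) hB (fun i => sub_nonneg.2 (hca i))
    (fun i => sub_le_self _ (hc0 i))).trans (hW _ hsumc')
  refine ⟨hs, MeasurableSet.iUnion fun _ => measurableSet_Icc, leftCover_subset_Icc hB hca, hvolL,
    MeasurableSet.iUnion fun _ => measurableSet_Icc,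
    rightCover_subset_Icc hB fun i => sub_le_self _ (hc0 i), hvolR, ?_⟩
  refine (measure_mono (busySet_subset_cover hc0 (fun i => sub_nonneg.2 (hca i)) hjob)).trans
    ((measure_union_le _ _).trans_eq ?_)
  rw [hvolL, hvolR, ← ENNReal.ofReal_add Wval_nonneg Wval_nonneg, two_mul]

theorem exists_isLowBusySchedule_of_sum_eq (hB : 0 < B) (hsum : ∑ i, a i = 2 * B)
    {S : Finset (Fin n)} (hS : ∑ i ∈ S, a i = B) :
    ∃ s S1 S2, IsLowBusySchedule n B a s S1 S2 := by
  classical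
  set c : Fin n → ℝ := fun i => if i ∈ S then (a i : ℝ) else 0
  have hc0 : ∀ i, 0 ≤ c i := fun i => by simp only [c]; split_ifs <;> positivity
  have hca : ∀ i, c i ≤ a i := fun i => by simp only [c]; split_ifs <;> simp
  have hsumc : ∑ i, c i = B := by
    simp only [c]
    rw [Finset.sum_ite_mem, Finset.univ_inter]
    exact_mod_cast hS
  refine ⟨_, _, _, isLowBusySchedule_leftCover_rightCover hB hsum hc0 hca hsumc
    (s := fun i => if i ∈ S then Rval n B a i
      else 2 * τval n B a - Rval n B a i - xval n B i - a i) (fun i => ?_) fun i => ?_⟩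
  · have := Rval_add_le_τval (a := a) (B := B) i
    have := Rval_nonneg (a := a) (B := B) i
    have := xval_nonneg (B := B) i
    split_ifs <;> constructor <;> linarith
  · by_cases h : i ∈ S
    · refine subset_union_of_subset_left (subset_iUnion_of_subset i ?_) _
      simp only [job, c, h, if_true]
      exact Icc_subset_Icc le_rfl (by linarith)
    · refine subset_union_of_subset_right (subset_iUnion_of_subset i ?_) _
      simp only [job, c, h, if_false, sub_zero]
      exact Icc_subset_Icc (by linarith) (by linarith)

end Instance

/-- **Theorem 8 (weak NP-hardness of mixed scheduling on a path, reduction from PARTITION).**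
The constructed mixed instance — for each `i` two tight jobs with windows `[R_i, R_i + x_i]`
and `[2τ − R_i − x_i, 2τ − R_i]` and processing time `x_i`, a non-preemptive job with window
`[R_i, 2τ − R_i]` and processing time `x_i + a_i`, and two preemptive jobs of processing time
`W` with windows `[0, τ]` and `[τ, 2τ]` — admits a feasible mixed schedule of busy time at
most `2W` if and only if the numbers `a_1, …, a_n` (with `∑ a_i = 2B`) admit a partition
`S` with `∑_{i ∈ S} a_i = B`. -/
theorem mixed_scheduling_partition (n B : ℕ) (hn : 2 ≤ n) (a : Fin n → ℕ)
    (ha : ∀ i, 0 < a i) (hsum : ∑ i, a i = 2 * B) :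
    (∃ (s : Fin n → ℝ) (S1 S2 : Set ℝ),
      -- the non-preemptive jobs are scheduled within their windows
      (∀ i, Rval n B a i ≤ s i ∧
        s i + (xval n B i + (a i : ℝ)) ≤ 2 * τval n B a - Rval n B a i) ∧
      -- the two preemptive jobs
      MeasurableSet S1 ∧ S1 ⊆ Set.Icc 0 (τval n B a) ∧
        volume S1 = ENNReal.ofReal (Wval n B) ∧
      MeasurableSet S2 ∧ S2 ⊆ Set.Icc (τval n B a) (2 * τval n B a) ∧
        volume S2 = ENNReal.ofReal (Wval n B) ∧
      -- the busy time (the tight jobs are forced to fill their whole windows)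
      volume ((⋃ i, Set.Icc (Rval n B a i) (Rval n B a i + xval n B i)) ∪
              (⋃ i, Set.Icc (2 * τval n B a - Rval n B a i - xval n B i)
                    (2 * τval n B a - Rval n B a i)) ∪
              (⋃ i, Set.Icc (s i) (s i + (xval n B i + (a i : ℝ)))) ∪
              S1 ∪ S2) ≤ ENNReal.ofReal (2 * Wval n B)) ↔
    (∃ S : Finset (Fin n), ∑ i ∈ S, a i = B) := by
  have hB : 0 < B := by
    have := Finset.single_le_sum (fun i _ => Nat.zero_le (a i))
      (Finset.mem_univ (⟨0, by omega⟩ : Fin n))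
    have := ha ⟨0, by omega⟩
    omega
  exact ⟨fun ⟨s, S1, S2, h⟩ => exists_sum_eq_of_isLowBusySchedule hB ha hsum h,
    fun ⟨S, hS⟩ => exists_isLowBusySchedule_of_sum_eq hB hsum hS⟩
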